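/- arXiv:2408.14527 — 2 statements merged into one kernel-verified Lean document; each statement's English description precedes it below -/
import Mathlib

section
/- In sequential pairwise planning (computing a collision-avoiding shortest path separately between each consecutive pair of via points and committing to it), there exist instances with moving obstacles where committing to the shortest first leg makes the second leg infeasible, while a jointly planned via-point path visiting both legs exists; hence sequential pairwise planning is incomplete whereas complete via-point search is not. -/
/-- A continuous-time trajectory `traj : ℝ → V` follows the directed graph `A` if
later positions are always reachable from earlier ones. -/
def Follows {V : Type*} (A : V → V → Prop) (traj : ℝ → V) : Prop :=
  ∀ s t : ℝ, s ≤ t → Relation.ReflTransGen A (traj s) (traj t)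

/-- A collision-free leg from node `u` at time `t₀` to node `v` at time `t₁`:
a graph-following trajectory that is at `u` at `t₀`, at `v` at `t₁`, and safe
(w.r.t. the moving obstacles of the reservation table, encoded by `Safe`) at every
intermediate time. Waiting in place is allowed. -/
def Leg {V : Type*} (A : V → V → Prop) (Safe : V → ℝ → Prop)
    (u : V) (t₀ : ℝ) (v : V) (t₁ : ℝ) : Prop :=
  t₀ ≤ t₁ ∧ ∃ traj : ℝ → V, Follows A traj ∧ traj t₀ = u ∧ traj t₁ = v ∧
    ∀ t ∈ Set.Icc t₀ t₁, Safe (traj t) t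

namespace SeqPlanCounterexample

/-- Corridor graph 0 → 1 → 2. -/
def A : Fin 3 → Fin 3 → Prop := fun i j => (i = 0 ∧ j = 1) ∨ (i = 1 ∧ j = 2)

/-- Reservation-table safety: node 0 is safe until time 3, node 1 only at time 1
or from time 3 on, node 2 only from time 4 on. -/
def Safe : Fin 3 → ℝ → Prop := fun v t =>
  if v = 0 then t ≤ 3 else if v = 1 then (t = 1 ∨ 3 ≤ t) else 4 ≤ t

lemma reach01 : Relation.ReflTransGen A 0 1 :=
  Relation.ReflTransGen.single (Or.inl ⟨rfl, rfl⟩)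

lemma reach12 : Relation.ReflTransGen A 1 2 :=
  Relation.ReflTransGen.single (Or.inr ⟨rfl, rfl⟩)

lemma reach02 : Relation.ReflTransGen A 0 2 := reach01.trans reach12

lemma reach_from_one {x : Fin 3} (h : Relation.ReflTransGen A 1 x) :
    x = 1 ∨ x = 2 := by
  induction h with
  | refl => exact Or.inl rfl
  | tail h' hstep ih =>
    rcases ih with h1 | h2
    · subst h1
      rcases hstep with ⟨h, _⟩ | ⟨_, h⟩
      · exact absurd h (by decide)
      · exact Or.inr h
    · subst h2
      rcases hstep with ⟨h, _⟩ | ⟨h, _⟩ <;> exact absurd h (by decide)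

end SeqPlanCounterexample

open SeqPlanCounterexample in
/-- incompleteness of sequential pairwise planning. There exists an
instance (graph, moving obstacles, via points `v₀ → v₁ → v₂`) in which a jointly
planned collision-free trajectory visiting `v₀, v₁, v₂` in order exists, yet
committing to a minimum-arrival-time collision-free first leg `v₀ → v₁` leaves no
collision-free continuation `v₁ → v₂` at all. -/
theorem sequential_pairwise_planning_incomplete :
    ∃ (V : Type) (A : V → V → Prop) (Safe : V → ℝ → Prop)
      (v₀ v₁ v₂ : V) (t₀ : ℝ),
      (∃ (t₁ t₂ : ℝ) (traj : ℝ → V), t₀ ≤ t₁ ∧ t₁ ≤ t₂ ∧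
        Follows A traj ∧ traj t₀ = v₀ ∧ traj t₁ = v₁ ∧ traj t₂ = v₂ ∧
        ∀ t ∈ Set.Icc t₀ t₂, Safe (traj t) t) ∧
      (∃ tmin : ℝ, IsLeast {t : ℝ | Leg A Safe v₀ t₀ v₁ t} tmin ∧
        ∀ t' : ℝ, ¬ Leg A Safe v₁ tmin v₂ t') := by
  refine ⟨Fin 3, A, Safe, 0, 1, 2, 0, ?_, ?_⟩
  ·
    refine ⟨3, 4, fun s => if s < 3 then 0 else if s < 4 then 1 else 2,
      by norm_num, by norm_num, ?_, by norm_num, by norm_num, by norm_num, ?_⟩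
    · intro s t hst
      by_cases hs3 : s < 3 <;> by_cases ht3 : t < 3 <;>
        by_cases hs4 : s < 4 <;> by_cases ht4 : t < 4 <;>
        simp only [if_pos, if_neg, hs3, ht3, hs4, ht4, if_true, if_false] <;>
        first
          | exact Relation.ReflTransGen.refl
          | exact reach01
          | exact reach12
          | exact reach02
          | linarith
    · intro t ht
      obtain ⟨h0, h4⟩ := ht
      by_cases ht3 : t < 3
      · simp only [if_pos ht3, Safe]
        norm_num
        linarith
      · by_cases ht4 : t < 4
        · simp only [if_neg ht3, if_pos ht4, Safe]
          norm_num
          right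
          linarith
        · simp only [if_neg ht3, if_neg ht4, Safe]
          rw [if_neg (by decide : ¬(2:Fin 3) = 0), if_neg (by decide : ¬(2:Fin 3) = 1)]
          linarith
  · refine ⟨1, ⟨⟨by norm_num, fun s => if s < 1 then 0 else 1, ?_, by norm_num,
      by norm_num, ?_⟩, ?_⟩, ?_⟩
    · -- Follows for first leg trajectory
      intro s t hst
      by_cases hs1 : s < 1 <;> by_cases ht1 : t < 1 <;>
        simp only [if_pos, if_neg, hs1, ht1, if_true, if_false] <;>
        first
          | exact Relation.ReflTransGen.refl
          | exact reach01
          | linarith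
    · intro t ht
      obtain ⟨h0, h1⟩ := ht
      by_cases ht1 : t < 1
      · simp only [if_pos ht1, Safe]
        norm_num
        linarith
      · simp only [if_neg ht1, Safe]
        norm_num
        left
        linarith
    · -- lower bound: any arrival time at node 1 is ≥ 1
      intro t ht
      obtain ⟨h0t, traj, _, _, htraj, hS⟩ := ht
      have := hS t ⟨h0t, le_refl t⟩
      rw [htraj] at this
      simp only [Safe] at this
      norm_num at this
      rcases this with h | h
      · exact le_of_eq h.symm
      · linarith
    · -- no continuation from node 1 at time 1
      intro t' ⟨h1t', traj, hF, hb, hc, hS⟩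
      rcases eq_or_lt_of_le h1t' with heq | hlt
      · subst heq
        rw [hb] at hc
        exact absurd hc (by decide)
      · set τ : ℝ := (1 + min t' 3) / 2 with hτ
        have hmin1 : 1 < min t' 3 := lt_min hlt (by norm_num)
        have h1τ : 1 < τ := by
          rw [hτ]; linarith
        have hτt' : τ ≤ t' := by
          have := min_le_left t' 3
          rw [hτ]; linarith
        have hτ3 : τ < 3 := by
          have := min_le_right t' 3
          rw [hτ]; linarith
        have hreach : Relation.ReflTransGen A 1 (traj τ) := by
          have := hF 1 τ (le_of_lt h1τ)
          rwa [hb] at this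
        have hsafe := hS τ ⟨le_of_lt h1τ, hτt'⟩
        rcases reach_from_one hreach with h1 | h2
        · rw [h1] at hsafe
          simp only [Safe] at hsafe
          norm_num at hsafe
          rcases hsafe with h | h <;> linarith
        · rw [h2] at hsafe
          simp only [Safe] at hsafe
          rw [if_neg (by decide : ¬(2:Fin 3) = 0), if_neg (by decide : ¬(2:Fin 3) = 1)] at hsafe
          linarith
end

section
/- If in the IPP algorithm each planned trajectory, together with its reserved return path to the robot's waiting place, is stored in the reservation table before the next task is planned, then at every planning step the invariant holds: every robot's last reserved configuration is either at its waiting place, or a reserved collision-free path from its last position to its waiting place exists in the table; consequently every robot can always be routed out of the way of any subsequently planned robot. -/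
/-- the IPP reservation invariant. `lastPos n r` is the last reserved
position of robot `r` after `n` planning steps, `w r` its waiting place, and
`Reserved n r x y` means that after `n` steps a collision-free path from `x` to `y`
for robot `r` is stored in the reservation table. If initially every robot is at its
waiting place, reservations are never removed, and each planning step updates one
robot and reserves a return path from its new last position to its waiting place,
then at every step every robot is either at its waiting place or has a reserved path
from its last position to its waiting place. -/
theorem ipp_reservation_invariant
    {V Robot : Type*}
    (w : Robot → V) (lastPos : ℕ → Robot → V)
    (Reserved : ℕ → Robot → V → V → Prop)
    (h0 : ∀ r, lastPos 0 r = w r)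
    (hmono : ∀ n r x y, Reserved n r x y → Reserved (n + 1) r x y)
    (hstep : ∀ n, ∃ rn : Robot,
      (∀ r, r ≠ rn → lastPos (n + 1) r = lastPos n r) ∧
      Reserved (n + 1) rn (lastPos (n + 1) rn) (w rn)) :
    ∀ n r, lastPos n r = w r ∨ Reserved n r (lastPos n r) (w r) := by
  intro n
  induction n with
  | zero => intro r; exact Or.inl (h0 r)
  | succ n ih =>
    intro r
    obtain ⟨rn, hother, hres⟩ := hstep n
    by_cases h : r = rn
    · subst h; exact Or.inr hres
    · rcases ih r with h1 | h1
      · exact Or.inl ((hother r h).trans h1)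
      · exact Or.inr ((hother r h) ▸ hmono n r _ _ h1)
end
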